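/- Let C be a finite family of flats of a matroid M with |C| > 1. Then there exists a finite family C' of flats of M with |C'| = |C|, Δ(C') ≥ Δ(C), and such that every member F of C' satisfies F ⊆ cl(⋃(C' \ {F})), i.e. each flat in C' is contained in the closure of the union of the other members of C'. -/

import Mathlib

/-- A matroid on a finite ground set `N`, given by an integer-valued rank
function satisfying the standard rank axioms. -/
structure FinMatroid (N : Type) [Fintype N] [DecidableEq N] where
  r : Finset N → ℤ
  r_nonneg : ∀ A, 0 ≤ r A
  r_le_card : ∀ A, r A ≤ (A.card : ℤ)
  r_mono : ∀ ⦃A B : Finset N⦄, A ⊆ B → r A ≤ r B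
  submodular : ∀ A B, r (A ∪ B) + r (A ∩ B) ≤ r A + r B

namespace FinMatroid

variable {N : Type} [Fintype N] [DecidableEq N]

/-- A set `F` is a flat if adding any element outside of `F` increases the rank. -/
def IsFlat (M : FinMatroid N) (F : Finset N) : Prop :=
  ∀ n ∉ F, M.r F < M.r (insert n F)

instance (M : FinMatroid N) (F : Finset N) : Decidable (M.IsFlat F) := by
  unfold IsFlat; infer_instance

/-- The Δ function of a (multi-indexed) family of sets: `Δ(C) = Σ_{S ⊆ I} (−1)^{|S|} r(F_S)`,
where `F_S` is the intersection of the members indexed by `S` for nonempty `S`, and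
`F_∅` is the union of all members of the family. -/
def delta (M : FinMatroid N) {ι : Type} [Fintype ι] [DecidableEq ι]
    (F : ι → Finset N) : ℤ :=
  ∑ S : Finset ι, (-1 : ℤ) ^ S.card *
    M.r (if S.Nonempty then S.inf F else Finset.univ.sup F)

/-- `M` is `n`-flat if `Δ(C) ≤ 0` for every family `C` of at most `n` flats. -/
def NFlat (M : FinMatroid N) (n : ℕ) : Prop :=
  ∀ (ι : Type) (_ : Fintype ι) (_ : DecidableEq ι) (F : ι → Finset N),
    Fintype.card ι ≤ n → (∀ i, M.IsFlat (F i)) → M.delta F ≤ 0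

/-- `M` is totally flat if `Δ(C) ≤ 0` for every finite family `C` of flats. -/
def TotallyFlat (M : FinMatroid N) : Prop :=
  ∀ (ι : Type) (_ : Fintype ι) (_ : DecidableEq ι) (F : ι → Finset N),
    (∀ i, M.IsFlat (F i)) → M.delta F ≤ 0

/-- `r(A/B) := r(A ∪ B) − r(B)`, the rank of `A` after contracting `B`. -/
def relRk (M : FinMatroid N) (A B : Finset N) : ℤ :=
  M.r (A ∪ B) - M.r B

/-- `B₀` is the pseudointersection of `A` and `B`: a flat `B₀ ⊆ B` such that for every
flat `B₁ ⊆ B`, `r(A/B₁) = r(A/B)` if and only if `B₀ ⊆ B₁`. -/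
def IsPseudoInter (M : FinMatroid N) (A B B₀ : Finset N) : Prop :=
  M.IsFlat B₀ ∧ B₀ ⊆ B ∧
    ∀ B₁, M.IsFlat B₁ → B₁ ⊆ B → (M.relRk A B₁ = M.relRk A B ↔ B₀ ⊆ B₁)

/-- `M` is pseudomodular if the pseudointersection of `A` and `B` exists for
all flats `A`, `B`. -/
def Pseudomodular (M : FinMatroid N) : Prop :=
  ∀ A B, M.IsFlat A → M.IsFlat B → ∃ B₀, M.IsPseudoInter A B B₀

/-- The closure of `A`: the smallest flat containing `A`, i.e. the intersection
of all flats containing `A`. -/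
def cl (M : FinMatroid N) (A : Finset N) : Finset N :=
  Finset.univ.filter (fun x => ∀ F : Finset N, M.IsFlat F → A ⊆ F → x ∈ F)

/-- A set `S` is cyclic if removing any element of `S` does not change its rank. -/
def Cyclic (M : FinMatroid N) (S : Finset N) : Prop :=
  ∀ n ∈ S, M.r (S.erase n) = M.r S

/-- A circuit is a minimal dependent set: it is dependent, and every proper
subset is independent. -/
def IsCircuit (M : FinMatroid N) (S : Finset N) : Prop :=
  M.r S < (S.card : ℤ) ∧ ∀ T ⊂ S, M.r T = (T.card : ℤ)

end FinMatroid

/-!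
Replacing a member `F j` of the family by `F j ∩ cl(⋃_{i ≠ j} F i)` keeps it a flat and changes
only the terms `S = ∅` and `S = {j}` of `Δ`: the union term becomes `r(⋃_{i ≠ j} F i)`, and
submodularity of `r` on `F j` and `cl(⋃_{i ≠ j} F i)` shows that `Δ` does not decrease. As long as
some member is not contained in the closure of the others, such a replacement strictly shrinks
the family, so repeating it terminates in a family of the required kind.
-/

namespace Finset

variable {ι α : Type*} [DecidableEq ι]

lemma inf_update_inter_of_subset [DecidableEq α] [Fintype α] (F : ι → Finset α) {j i : ι}
    {L : Finset α} {S : Finset ι} (hi : i ∈ S) (hij : i ≠ j) (hiL : F i ⊆ L) :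
    S.inf (Function.update F j (F j ∩ L)) = S.inf F := by
  refine le_antisymm (inf_mono_fun fun k _ => ?_) (Finset.le_inf fun k hk => ?_)
  · rw [Function.update_apply]
    split_ifs with hkj
    · exact hkj ▸ inter_subset_left
    · exact le_rfl
  · rw [Function.update_apply]
    split_ifs with hkj
    · subst hkj
      exact subset_inter (inf_le hk) ((inf_le hi).trans hiL)
    · exact inf_le hk

lemma sup_univ_update [DecidableEq α] [Fintype ι] (F : ι → Finset α) (j : ι) (A : Finset α) :
    univ.sup (Function.update F j A) = A ∪ (univ.erase j).sup F := by
  conv_lhs => rw [← insert_erase (mem_univ j)]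
  rw [sup_insert, Function.update_self, sup_eq_union]
  exact congrArg (A ∪ ·)
    (sup_congr rfl fun i hi => Function.update_of_ne (ne_of_mem_erase hi) A F)

lemma sum_card_update_lt [Fintype ι] (F : ι → Finset α) {j : ι} {A : Finset α} (hA : A ⊂ F j) :
    ∑ i, (Function.update F j A i).card < ∑ i, (F i).card := by
  refine sum_lt_sum (fun i _ => card_le_card ?_) ⟨j, mem_univ j, by simpa using card_lt_card hA⟩
  rw [Function.update_apply]
  split_ifs with hij
  exacts [hij ▸ hA.subset, subset_rfl]

end Finset

namespace FinMatroid

variable {N : Type} [Fintype N] [DecidableEq N] (M : FinMatroid N)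

open Finset

lemma r_lt_r_insert_of_subset_isFlat {G S : Finset N} (hG : M.IsFlat G) (hS : S ⊆ G)
    {x : N} (hx : x ∉ G) : M.r S < M.r (insert x S) := by
  have hsub := M.submodular (insert x S) G
  rw [insert_union, union_eq_right.mpr hS, insert_inter_of_notMem hx,
    inter_eq_left.mpr hS] at hsub
  linarith [hG x hx]

lemma IsFlat.inter {M : FinMatroid N} {A B : Finset N} (hA : M.IsFlat A) (hB : M.IsFlat B) :
    M.IsFlat (A ∩ B) := by
  intro x hx
  by_cases hxA : x ∈ A
  · exact M.r_lt_r_insert_of_subset_isFlat hB inter_subset_right fun hxB =>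
      hx (mem_inter.mpr ⟨hxA, hxB⟩)
  · exact M.r_lt_r_insert_of_subset_isFlat hA inter_subset_left hxA

lemma subset_cl (A : Finset N) : A ⊆ M.cl A := fun _ hx =>
  mem_filter.mpr ⟨mem_univ _, fun _ _ hAF => hAF hx⟩

lemma cl_subset_of_isFlat {A F : Finset N} (hF : M.IsFlat F) (hAF : A ⊆ F) : M.cl A ⊆ F :=
  fun _ hx => (mem_filter.mp hx).2 F hF hAF

lemma isFlat_cl (A : Finset N) : M.IsFlat (M.cl A) := by
  intro x hx
  simp only [cl, mem_filter, mem_univ, true_and, not_forall] at hx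
  obtain ⟨G, hG, hAG, hxG⟩ := hx
  exact M.r_lt_r_insert_of_subset_isFlat hG (M.cl_subset_of_isFlat hG hAG) hxG

lemma r_union_eq_of_forall_r_insert_eq {A B : Finset N}
    (h : ∀ x ∈ B, M.r (insert x A) = M.r A) : M.r (A ∪ B) = M.r A := by
  induction B using Finset.induction_on with
  | empty => rw [union_empty]
  | @insert x B _ ih =>
    have hAB := ih fun y hy => h y (mem_insert_of_mem hy)
    have hsub := M.submodular (A ∪ B) (insert x A)
    rw [union_insert, union_eq_left.mpr subset_union_left] at hsub
    have hinter := M.r_mono (subset_inter (subset_union_left (s₂ := B)) (subset_insert x A))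
    have hmono := M.r_mono (subset_union_left (s₁ := A) (s₂ := insert x B))
    rw [union_insert] at hmono ⊢
    linarith [h x (mem_insert_self x B)]

-- The elements that do not raise the rank of `A` form a flat of the same rank as `A`.
lemma r_cl (A : Finset N) : M.r (M.cl A) = M.r A := by
  set E := A ∪ univ.filter fun x => M.r (insert x A) = M.r A
  have hrE : M.r E = M.r A :=
    M.r_union_eq_of_forall_r_insert_eq fun x hx => (mem_filter.mp hx).2
  have hE : M.IsFlat E := by
    intro x hxE
    have hx : M.r (insert x A) ≠ M.r A := fun h =>
      hxE (mem_union_right _ (mem_filter.mpr ⟨mem_univ x, h⟩))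
    calc M.r E = M.r A := hrE
      _ < M.r (insert x A) := (M.r_mono (subset_insert x A)).lt_of_ne' hx
      _ ≤ M.r (insert x E) := M.r_mono (insert_subset_insert x subset_union_left)
  have := M.r_mono (M.cl_subset_of_isFlat hE subset_union_left)
  have := M.r_mono (M.subset_cl A)
  omega

lemma r_union_add_r_inter_cl_le (A V : Finset N) :
    M.r (A ∪ V) + M.r (A ∩ M.cl V) ≤ M.r A + M.r ((A ∩ M.cl V) ∪ V) := by
  have hV := M.r_mono (subset_union_right (s₁ := A ∩ M.cl V) (s₂ := V))
  have hcl := M.r_mono (union_subset_union_right (s := A) (M.subset_cl V))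
  linarith [M.submodular A (M.cl V), M.r_cl V]

lemma delta_sub_delta_of_inf_eq {ι : Type} [Fintype ι] [DecidableEq ι] (F G : ι → Finset N)
    (j : ι) (h : ∀ S : Finset ι, S.Nonempty → S ≠ {j} → S.inf G = S.inf F) :
    M.delta G - M.delta F =
      M.r (univ.sup G) - M.r (univ.sup F) - (M.r (G j) - M.r (F j)) := by
  rw [delta, delta, ← sum_sub_distrib,
    ← sum_subset (subset_univ {∅, {j}}) fun S _ hS => ?_, sum_pair (singleton_ne_empty j).symm]
  · simp only [card_empty, card_singleton, pow_zero, pow_one, one_mul, neg_one_mul,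
      Finset.not_nonempty_empty, singleton_nonempty, if_false, if_true, inf_singleton]
    ring
  · simp only [mem_insert, mem_singleton, not_or] at hS
    have hSne : S.Nonempty := nonempty_iff_ne_empty.mpr hS.1
    rw [if_pos hSne, if_pos hSne, h S hSne hS.2, sub_self]

lemma delta_le_delta_update_inter_cl {ι : Type} [Fintype ι] [DecidableEq ι]
    (F : ι → Finset N) (j : ι) :
    M.delta F ≤ M.delta (Function.update F j (F j ∩ M.cl ((univ.erase j).sup F))) := by
  set V := (univ.erase j).sup F
  have hdiff := M.delta_sub_delta_of_inf_eq F (Function.update F j (F j ∩ M.cl V)) j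
    fun S hS hSj => by
      obtain ⟨i, hi, hij⟩ : ∃ i ∈ S, i ≠ j := by
        by_contra! h
        exact hSj (eq_singleton_iff_nonempty_unique_mem.mpr ⟨hS, h⟩)
      exact inf_update_inter_of_subset F hi hij
        ((le_sup (mem_erase.mpr ⟨hij, mem_univ i⟩)).trans (M.subset_cl V))
  rw [sup_univ_update, Function.update_self, ← Function.update_eq_self j F, sup_univ_update,
    Function.update_eq_self] at hdiff
  linarith [M.r_union_add_r_inter_cl_le (F j) V]

end FinMatroid

/-- For any finite family `C` of flats of a matroid `M` with `|C| > 1`, there is a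
family `C'` of the same cardinality, with `Δ(C') ≥ Δ(C)`, such that every member of
`C'` is contained in the closure of the union of the other members. -/
theorem delta_le_delta_contained {N : Type} [Fintype N] [DecidableEq N]
    (M : FinMatroid N) {ι : Type} [Fintype ι] [DecidableEq ι]
    (F : ι → Finset N) (hF : ∀ i, M.IsFlat (F i)) :
    ∃ F' : ι → Finset N, (∀ i, M.IsFlat (F' i)) ∧ M.delta F ≤ M.delta F' ∧
      ∀ i, F' i ⊆ M.cl ((Finset.univ.erase i).sup F') := by
  by_cases hall : ∀ i, F i ⊆ M.cl ((Finset.univ.erase i).sup F)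
  · exact ⟨F, hF, le_rfl, hall⟩
  push Not at hall
  obtain ⟨j, hj⟩ := hall
  set G := Function.update F j (F j ∩ M.cl ((Finset.univ.erase j).sup F))
  have hG : ∀ i, M.IsFlat (G i) := (Function.forall_update_iff F fun _ => M.IsFlat).mpr
    ⟨(hF j).inter (M.isFlat_cl _), fun i _ => hF i⟩
  have hshrink : ∑ i, (G i).card < ∑ i, (F i).card := Finset.sum_card_update_lt F
    (Finset.inter_subset_left.ssubset_of_not_subset fun h => hj (h.trans Finset.inter_subset_right))
  obtain ⟨F', hF', hle, hcontained⟩ := delta_le_delta_contained M G hG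
  exact ⟨F', hF', (M.delta_le_delta_update_inter_cl F j).trans hle, hcontained⟩
termination_by ∑ i, (F i).card
decreasing_by exact hshrink
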